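/- For K ≥ 2, every permutation of size at most K having exactly one descent can be obtained from the identity permutation by one duplication-loss step of width at most K. -/

import Mathlib

def descents (l : List ℕ) : ℕ :=
  (l.zip l.tail).countP (fun p => decide (p.2 < p.1))
def IsPermList (n : ℕ) (l : List ℕ) : Prop :=
  l.Perm (List.range' 1 n)
inductive Interleave : List ℕ → List ℕ → List ℕ → Prop
  | nil : Interleave [] [] []
  | left {x : ℕ} {l a b : List ℕ} : Interleave l a b → Interleave (x :: l) (x :: a) b
  | right {x : ℕ} {l a b : List ℕ} : Interleave l a b → Interleave (x :: l) a (x :: b)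

def DLStep (K : ℕ) (τ σ : List ℕ) : Prop :=
  ∃ pre w post w1 w2 : List ℕ, τ = pre ++ w ++ post ∧ w.length ≤ K ∧
    Interleave w w1 w2 ∧ σ = pre ++ (w1 ++ w2) ++ post

def DLIter (K : ℕ) : ℕ → List ℕ → List ℕ → Prop
  | 0, τ, σ => τ = σ
  | p + 1, τ, σ => ∃ μ, DLStep K τ μ ∧ DLIter K p μ σ

def ObtainableIn (K p : ℕ) (τ σ : List ℕ) : Prop :=
  ∃ q ≤ p, DLIter K q τ σ

/-!
A permutation with one descent is the concatenation of two increasing runs `a ++ b`. The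
identity is the sorted rearrangement of `a ++ b`, hence equals `merge a b`, and `merge` is an
interleaving of `a` and `b`; so one step on the whole window `[1, …, n]` produces `a ++ b`.
-/

open List

theorem interleave_nil_left : ∀ l : List ℕ, Interleave l [] l
  | [] => .nil
  | _ :: l => .right (interleave_nil_left l)

theorem interleave_nil_right : ∀ l : List ℕ, Interleave l l []
  | [] => .nil
  | _ :: l => .left (interleave_nil_right l)

theorem interleave_merge : ∀ a b : List ℕ, Interleave (a.merge b) a b
  | [], b => by simpa using interleave_nil_left b
  | a, [] => by simpa using interleave_nil_right a
  | x :: a, y :: b => by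
    rw [cons_merge_cons]
    split
    · exact .left (interleave_merge a (y :: b))
    · exact .right (interleave_merge (x :: a) b)

theorem interleave_of_sortedLE {l a b : List ℕ} (hl : l.SortedLE) (ha : a.SortedLE)
    (hb : b.SortedLE) (hp : l ~ a ++ b) : Interleave l a b := by
  have hmerge : (a.merge b).SortedLE := (ha.pairwise.merge hb.pairwise).sortedLE
  rw [(hp.trans (merge_perm_append _).symm).eq_of_sortedLE hl hmerge]
  exact interleave_merge a b

theorem dlStep_of_interleave {K : ℕ} {w a b : List ℕ} (hw : w.length ≤ K)
    (h : Interleave w a b) : DLStep K w (a ++ b) :=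
  ⟨[], w, [], a, b, by simp, hw, h, by simp⟩

theorem descents_cons_cons (x y : ℕ) (l : List ℕ) :
    descents (x :: y :: l) = (if y < x then 1 else 0) + descents (y :: l) := by
  simp only [descents, tail_cons, zip_cons_cons, countP_cons, decide_eq_true_eq]
  omega

theorem sortedLE_of_descents_eq_zero : ∀ {l : List ℕ}, descents l = 0 → l.SortedLE
  | [], _ => Pairwise.nil.sortedLE
  | [x], _ => (pairwise_singleton _ x).sortedLE
  | x :: y :: l, h => by
    rw [descents_cons_cons] at h
    have hxy : x ≤ y := by split_ifs at h <;> omega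
    have hl : (y :: l).SortedLE := sortedLE_of_descents_eq_zero (by omega)
    rw [sortedLE_iff_isChain] at hl ⊢
    exact isChain_cons_cons.mpr ⟨hxy, hl⟩

theorem exists_append_sortedLE_of_descents_le_one : ∀ {l : List ℕ}, descents l ≤ 1 →
    ∃ a b, l = a ++ b ∧ a.SortedLE ∧ b.SortedLE
  | [], _ => ⟨[], [], rfl, Pairwise.nil.sortedLE, Pairwise.nil.sortedLE⟩
  | [x], _ => ⟨[x], [], rfl, (pairwise_singleton _ x).sortedLE, Pairwise.nil.sortedLE⟩
  | x :: y :: l, h => by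
    rw [descents_cons_cons] at h
    by_cases hyx : y < x
    · exact ⟨[x], y :: l, rfl, (pairwise_singleton _ x).sortedLE,
        sortedLE_of_descents_eq_zero (by simp only [hyx, if_true] at h; omega)⟩
    · obtain ⟨a, b, hab, ha, hb⟩ :=
        exists_append_sortedLE_of_descents_le_one (l := y :: l) (by simp only [hyx] at h; omega)
      refine ⟨x :: a, b, by rw [hab, cons_append], ?_, hb⟩
      have hxa : ∀ z ∈ a.head?, x ≤ z := by
        intro z hz
        have : (y :: l).head? = some z := by rw [hab, head?_append, Option.mem_def.mp hz]; rfl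
        simp only [head?_cons, Option.some.injEq] at this
        omega
      rw [sortedLE_iff_isChain] at ha ⊢
      exact isChain_cons.mpr ⟨hxa, ha⟩

theorem stmt9_general (K n : ℕ) (hn : n ≤ K) (l : List ℕ) (h : IsPermList n l)
    (hd : descents l = 1) : DLStep K (List.range' 1 n) l := by
  obtain ⟨a, b, rfl, ha, hb⟩ := exists_append_sortedLE_of_descents_le_one hd.le
  refine dlStep_of_interleave (by simpa using hn) ?_
  exact interleave_of_sortedLE (sortedLE_range' 1 n 1) ha hb h.symm

theorem stmt9 (K n : ℕ) (hK : 2 ≤ K) (hn : n ≤ K) (l : List ℕ) (h : IsPermList n l)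
    (hd : descents l = 1) : DLStep K (List.range' 1 n) l :=
  stmt9_general K n hn l h hd
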